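/- Let f ∈ Z[x^{±1}, y_1^{±1}, …, y_n^{±1}] be invariant under x ↦ x^{-1} and under the hyperoctahedral group acting on y_1,…,y_n (permutations and inversions). Write f = f_0 + x·f_1 with f_0, f_1 ∈ Z[u, v_1,…,v_n]^{S_n}, where u = x + x^{-1}, v_j = y_j + y_j^{-1} (this decomposition exists and is unique since x² − ux + 1 = 0). If x·∂f/∂x + y_j·∂f/∂y_j ∈ (y_j − x) for all j, then f_1 vanishes under each substitution y_j = x, i.e., f_1 is divisible by ∏_j (u − v_j) in Z[u, v_1, …, v_n]^{S_n}. -/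

import Mathlib

/-!
Substituting `y_j = x` kills `y_j - x` and turns `x∂/∂x + y_j∂/∂y_j` into `x∂/∂x`, so the image
of `f` under this substitution only has monomials of `x`-degree `0` and is fixed by `x ↦ x⁻¹`.
This image is also `g₀ + x g₁`, where `gᵢ` is the image of `pᵢ` under `v_j ↦ u`; both `gᵢ` are
fixed by `x ↦ x⁻¹`, and `x⁻¹ ≠ x` in a domain, so `g₁ = 0`. As `u, v₁, …, v_n` are algebraically
independent (their leading monomials `x, y₁, …, y_n` are), `p₁` itself vanishes under `v_j ↦ u`,
i.e. `u - v_j ∣ p₁`. The other factors `u - v_k` survive this substitution, so the whole product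
divides `p₁`, and the quotient is symmetric by cancellation.
-/

namespace Stmt10

variable (n : ℕ)

/-- the Laurent polynomial ring `ℤ[x^{±1}, y₁^{±1}, …, y_n^{±1}]`. -/
abbrev A (n : ℕ) := AddMonoidAlgebra ℤ (ℤ × (Fin n → ℤ))

noncomputable def X : A n := AddMonoidAlgebra.single (1, 0) 1
noncomputable def Y (j : Fin n) : A n := AddMonoidAlgebra.single (0, Pi.single j 1) 1
noncomputable def u : A n :=
  AddMonoidAlgebra.single (1, 0) 1 + AddMonoidAlgebra.single (-1, 0) 1
noncomputable def v (j : Fin n) : A n :=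
  AddMonoidAlgebra.single (0, Pi.single j 1) 1 + AddMonoidAlgebra.single (0, -Pi.single j 1) 1

/-- permutation of the `y` variables on exponents. -/
def permE (σ : Equiv.Perm (Fin n)) : (ℤ × (Fin n → ℤ)) ≃ (ℤ × (Fin n → ℤ)) :=
  Equiv.prodCongr (Equiv.refl ℤ) (Equiv.arrowCongr σ (Equiv.refl ℤ))

/-- inversion `y_j ↦ y_j⁻¹` on exponents. -/
def flipE (j : Fin n) : (ℤ × (Fin n → ℤ)) ≃ (ℤ × (Fin n → ℤ)) :=
  Function.Involutive.toPerm (fun m => (m.1, Function.update m.2 j (-(m.2 j))))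
    (by
      intro m
      refine Prod.ext rfl ?_
      funext i
      by_cases h : i = j
      · subst h; simp
      · simp [Function.update_of_ne h])

/-- inversion `x ↦ x⁻¹` on exponents. -/
def flipX : (ℤ × (Fin n → ℤ)) ≃ (ℤ × (Fin n → ℤ)) :=
  Function.Involutive.toPerm (fun m => (-m.1, m.2)) (by intro m; simp)

/-- the Euler operator `x∂/∂x + y_j∂/∂y_j`. -/
noncomputable def D (j : Fin n) (f : A n) : A n :=
  Finsupp.sum (AddMonoidAlgebra.coeff f) fun m c => AddMonoidAlgebra.single m ((m.1 + m.2 j) * c)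

/-- symmetry of a polynomial in `u, v₁, …, v_n` under permutations of the `v`'s. -/
def IsSym (p : MvPolynomial (Option (Fin n)) ℤ) : Prop :=
  ∀ σ : Equiv.Perm (Fin n), MvPolynomial.rename (Option.map σ) p = p

/-- evaluation `ℤ[u,v₁,…,v_n] → ℤ[x^{±1},y^{±1}]`. -/
noncomputable def ev : MvPolynomial (Option (Fin n)) ℤ →ₐ[ℤ] A n :=
  MvPolynomial.aeval (fun o : Option (Fin n) => o.elim (u n) (v n))

section Weight

variable {R M M' : Type*} [Semiring R]

noncomputable def weight (w : M → R) (f : AddMonoidAlgebra R M) : AddMonoidAlgebra R M :=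
  f.coeff.sum fun m c => AddMonoidAlgebra.single m (w m * c)

theorem coeff_weight (w : M → R) (f : AddMonoidAlgebra R M) (m : M) :
    (weight w f).coeff m = w m * f.coeff m := by
  classical
  simp only [weight, Finsupp.sum, AddMonoidAlgebra.coeff_sum, Finset.sum_apply',
    AddMonoidAlgebra.coeff_single, Finsupp.single_apply]
  rw [Finset.sum_ite_eq']
  split_ifs with h
  · rfl
  · rw [Finsupp.notMem_support_iff.1 h, mul_zero]

theorem weight_add (w : M → R) (f g : AddMonoidAlgebra R M) :
    weight w (f + g) = weight w f + weight w g := by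
  ext m
  simp only [coeff_weight, AddMonoidAlgebra.coeff_add, Finsupp.add_apply, mul_add]

theorem weight_single (w : M → R) (m : M) (c : R) :
    weight w (AddMonoidAlgebra.single m c) = AddMonoidAlgebra.single m (w m * c) := by
  classical
  ext m'
  simp only [coeff_weight, AddMonoidAlgebra.coeff_single, Finsupp.single_apply]
  split_ifs with h
  · rw [h]
  · rw [mul_zero]

theorem mapDomain_weight_comp (g : M → M') (w : M' → R) (f : AddMonoidAlgebra R M) :
    AddMonoidAlgebra.mapDomain g (weight (w ∘ g) f) =
      weight w (AddMonoidAlgebra.mapDomain g f) := by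
  induction f using AddMonoidAlgebra.induction with
  | zero => simp [weight]
  | single_add m c f _ _ ih =>
    simp only [weight_add, AddMonoidAlgebra.mapDomain_add, weight_single, ih,
      AddMonoidAlgebra.mapDomain_single, Function.comp_apply]

theorem coeff_eq_zero_of_weight_eq_zero [NoZeroDivisors R] {w : M → R} {f : AddMonoidAlgebra R M}
    (h : weight w f = 0) {m : M} (hm : w m ≠ 0) : f.coeff m = 0 := by
  have := coeff_weight w f m
  rw [h] at this
  exact (mul_eq_zero.1 this.symm).resolve_left hm

end Weight

theorem eq_zero_of_map_add_mul_eq {R : Type*} [Ring R] [NoZeroDivisors R] (τ : R →+* R)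
    {a b x : R} (ha : τ a = a) (hb : τ b = b) (hx : τ x ≠ x) (h : τ (a + x * b) = a + x * b) :
    b = 0 := by
  rw [map_add, map_mul, ha, hb, add_right_inj] at h
  have : (τ x - x) * b = 0 := by rw [sub_mul, h, sub_self]
  exact (mul_eq_zero.1 this).resolve_left (sub_ne_zero.2 hx)

section MonicTop

variable {R M : Type*} [Semiring R] [AddCommMonoid M] [PartialOrder M]

def HasMonicTop (f : AddMonoidAlgebra R M) (s : M) : Prop :=
  f.coeff s = 1 ∧ ∀ m ∈ f.coeff.support, m ≤ s

theorem hasMonicTop_one : HasMonicTop (1 : AddMonoidAlgebra R M) 0 := by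
  classical
  refine ⟨by simp [AddMonoidAlgebra.one_def], fun m hm => ?_⟩
  rw [AddMonoidAlgebra.one_def, AddMonoidAlgebra.coeff_single] at hm
  exact (Finset.mem_singleton.1 (Finsupp.support_single_subset hm)).le

theorem HasMonicTop.mul [IsOrderedCancelAddMonoid M] {f g : AddMonoidAlgebra R M} {s t : M}
    (hf : HasMonicTop f s) (hg : HasMonicTop g t) : HasMonicTop (f * g) (s + t) := by
  classical
  refine ⟨?_, fun m hm => ?_⟩
  · rw [AddMonoidAlgebra.coeff_mul_add_of_uniqueAdd, hf.1, hg.1, one_mul]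
    intro a b ha hb hab
    exact (add_eq_add_iff_eq_and_eq (hf.2 a ha) (hg.2 b hb)).1 hab
  · obtain ⟨a, ha, b, hb, rfl⟩ :=
      Finset.mem_add.1 (AddMonoidAlgebra.support_coeff_mul_subset f g hm)
    exact add_le_add (hf.2 a ha) (hg.2 b hb)

theorem HasMonicTop.pow [IsOrderedCancelAddMonoid M] {f : AddMonoidAlgebra R M} {s : M}
    (hf : HasMonicTop f s) (k : ℕ) : HasMonicTop (f ^ k) (k • s) := by
  induction k with
  | zero => simpa using hasMonicTop_one
  | succ k ih => simpa [pow_succ, succ_nsmul] using ih.mul hf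

theorem hasMonicTop_single_add_single {s t : M} (h : t < s) :
    HasMonicTop (AddMonoidAlgebra.single s (1 : R) + AddMonoidAlgebra.single t 1) s := by
  classical
  refine ⟨by simp [AddMonoidAlgebra.coeff_single, h.ne], fun m hm => ?_⟩
  rw [AddMonoidAlgebra.coeff_add, AddMonoidAlgebra.coeff_single,
    AddMonoidAlgebra.coeff_single] at hm
  rcases Finset.mem_union.1 (Finsupp.support_add hm) with hm | hm <;>
    obtain rfl := Finset.mem_singleton.1 (Finsupp.support_single_subset hm)
  exacts [le_rfl, h.le]

end MonicTop

section Divisibility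

variable {σ R : Type*} [CommRing R]

theorem X_none_sub_X_some_ne_zero [Nontrivial R] (j : σ) :
    (MvPolynomial.X none - MvPolynomial.X (some j) : MvPolynomial (Option σ) R) ≠ 0 :=
  sub_ne_zero.2 (MvPolynomial.X_injective.ne (by simp))

variable [DecidableEq σ]

theorem X_sub_dvd_sub_aeval_update (i : σ) (a p : MvPolynomial σ R) :
    MvPolynomial.X i - a ∣ p - MvPolynomial.aeval (Function.update MvPolynomial.X i a) p := by
  induction p using MvPolynomial.induction_on with
  | C r => simp
  | add p q hp hq => simpa [add_sub_add_comm] using dvd_add hp hq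
  | mul_X p k hp =>
    set φ := MvPolynomial.aeval (R := R) (Function.update MvPolynomial.X i a)
    have hk : MvPolynomial.X i - a ∣ MvPolynomial.X k - φ (MvPolynomial.X k) := by
      rcases eq_or_ne k i with rfl | hk <;> simp [φ, *]
    have : p * MvPolynomial.X k - φ (p * MvPolynomial.X k) =
        (p - φ p) * MvPolynomial.X k + φ p * (MvPolynomial.X k - φ (MvPolynomial.X k)) := by
      rw [map_mul]; ring
    rw [this]
    exact dvd_add (dvd_mul_of_dvd_left hp _) (dvd_mul_of_dvd_right hk _)

-- `X none` plays the role of `u` and `X (some j)` that of `v_j`.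
noncomputable def vToU (j : σ) : MvPolynomial (Option σ) R →ₐ[R] MvPolynomial (Option σ) R :=
  MvPolynomial.aeval (Function.update MvPolynomial.X (some j) (MvPolynomial.X none))

variable [IsDomain R]

theorem prod_X_sub_X_dvd (s : Finset σ) {p : MvPolynomial (Option σ) R}
    (h : ∀ j ∈ s, vToU j p = 0) :
    ∏ j ∈ s, (MvPolynomial.X none - MvPolynomial.X (some j) : MvPolynomial (Option σ) R) ∣ p := by
  induction s using Finset.induction_on generalizing p with
  | empty => simp
  | insert i s hi ih =>
    obtain ⟨q, rfl⟩ : MvPolynomial.X none - MvPolynomial.X (some i) ∣ p := by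
      have : MvPolynomial.X (some i) - MvPolynomial.X none ∣ p - vToU i p :=
        X_sub_dvd_sub_aeval_update (some i) (MvPolynomial.X none) p
      rwa [h i (Finset.mem_insert_self i s), sub_zero, ← neg_sub, neg_dvd] at this
    rw [Finset.prod_insert hi]
    refine mul_dvd_mul_left _ (ih fun j hj => ?_)
    have hji : j ≠ i := fun hji => hi (hji ▸ hj)
    simpa [vToU, hji.symm, X_none_sub_X_some_ne_zero] using h j (Finset.mem_insert_of_mem hj)

end Divisibility

section Laurent

variable {n}

def negFst : ℤ × (Fin n → ℤ) →+ ℤ × (Fin n → ℤ) :=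
  AddMonoidHom.mk' (fun m => (-m.1, m.2)) fun a b => by ext <;> simp [add_comm]

def yToXExp (j : Fin n) : ℤ × (Fin n → ℤ) →+ ℤ × (Fin n → ℤ) :=
  AddMonoidHom.mk' (fun m => (m.1 + m.2 j, m.2 - Pi.single j (m.2 j))) fun a b => by
    ext <;> simp [Pi.single_add] <;> ring

noncomputable def xInv : A n →+* A n := AddMonoidAlgebra.mapDomainRingHom ℤ negFst

noncomputable def yToX (j : Fin n) : A n →+* A n := AddMonoidAlgebra.mapDomainRingHom ℤ (yToXExp j)

@[simp] theorem ev_X_none : ev n (MvPolynomial.X none) = u n := by simp [ev]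
@[simp] theorem ev_X_some (k : Fin n) : ev n (MvPolynomial.X (some k)) = v n k := by simp [ev]

theorem xInv_X_ne : xInv (X n) ≠ X n := by
  simp [xInv, X, negFst, AddMonoidAlgebra.single_left_inj]

theorem xInv_ev (p : MvPolynomial (Option (Fin n)) ℤ) : xInv (ev n p) = ev n p := by
  suffices xInv.toIntAlgHom.comp (ev n) = ev n from DFunLike.congr_fun this p
  refine MvPolynomial.algHom_ext fun o => ?_
  change xInv (ev n (MvPolynomial.X o)) = ev n (MvPolynomial.X o)
  rcases o with _ | k
  · simp [xInv, u, negFst, AddMonoidAlgebra.mapDomain_add, add_comm]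
  · simp [xInv, v, negFst, AddMonoidAlgebra.mapDomain_add]

theorem yToX_X (j : Fin n) : yToX j (X n) = X n := by
  simp [yToX, X, yToXExp]

theorem yToX_Y (j : Fin n) : yToX j (Y n j) = X n := by
  simp [yToX, X, Y, yToXExp]

theorem yToX_ev (j : Fin n) (p : MvPolynomial (Option (Fin n)) ℤ) :
    yToX j (ev n p) = ev n (vToU j p) := by
  suffices (yToX j).toIntAlgHom.comp (ev n) = (ev n).comp (vToU j) from DFunLike.congr_fun this p
  refine MvPolynomial.algHom_ext fun o => ?_
  change yToX j (ev n (MvPolynomial.X o)) = ev n (vToU j (MvPolynomial.X o))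
  rcases o with _ | k
  · simp [yToX, vToU, u, yToXExp, AddMonoidAlgebra.mapDomain_add]
  · rcases eq_or_ne k j with rfl | hk
    · simp [yToX, vToU, u, v, yToXExp, AddMonoidAlgebra.mapDomain_add, Pi.single_neg]
    · simp [yToX, vToU, v, yToXExp, hk, AddMonoidAlgebra.mapDomain_add]

def leadExp : (Option (Fin n) →₀ ℕ) →+ ℤ × (Fin n → ℤ) where
  toFun e := (e none, fun k => e (some k))
  map_zero' := by ext <;> simp
  map_add' e e' := by ext <;> simp

theorem le_of_leadExp_le {e e' : Option (Fin n) →₀ ℕ} (h : leadExp e ≤ leadExp e') : e ≤ e' := by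
  rintro (_ | k)
  · exact_mod_cast show ((e none : ℕ) : ℤ) ≤ e' none from h.1
  · exact_mod_cast show ((e (some k) : ℕ) : ℤ) ≤ e' (some k) from h.2 k

theorem hasMonicTop_ev_X (o : Option (Fin n)) :
    HasMonicTop (ev n (MvPolynomial.X o)) (leadExp (Finsupp.single o 1)) := by
  rcases o with _ | k
  · have h : leadExp (Finsupp.single none 1) = ((1 : ℤ), (0 : Fin n → ℤ)) := by
      ext <;> simp [leadExp]
    rw [ev_X_none, h]
    exact hasMonicTop_single_add_single (by simp [Prod.lt_iff])
  · have h : leadExp (Finsupp.single (some k) 1) = ((0 : ℤ), (Pi.single k 1 : Fin n → ℤ)) := by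
      ext <;> simp [leadExp, Pi.single_apply, Finsupp.single_apply, eq_comm]
    rw [ev_X_some, h]
    exact hasMonicTop_single_add_single
      (Prod.mk_lt_mk_of_le_of_lt le_rfl (neg_lt_self (Pi.single_pos.2 one_pos)))

theorem hasMonicTop_ev_monomial (e : Option (Fin n) →₀ ℕ) :
    HasMonicTop (ev n (MvPolynomial.monomial e 1)) (leadExp e) := by
  induction e using Finsupp.induction with
  | zero => simpa using hasMonicTop_one
  | single_add o k e _ _ ih =>
    rw [MvPolynomial.monomial_single_add, map_mul, map_pow, map_add,
      ← Finsupp.smul_single_one, map_nsmul]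
    exact ((hasMonicTop_ev_X o).pow k).mul ih

theorem coeff_ev_leadExp {p : MvPolynomial (Option (Fin n)) ℤ} {e : Option (Fin n) →₀ ℕ}
    (he : Maximal (· ∈ p.support) e) : (ev n p).coeff (leadExp e) = p.coeff e := by
  have hmon : ∀ (e' : Option (Fin n) →₀ ℕ) (c : ℤ),
      MvPolynomial.monomial e' c = c • MvPolynomial.monomial e' (1 : ℤ) := by
    simp [MvPolynomial.smul_monomial]
  conv_lhs => rw [p.as_sum]
  rw [map_sum, AddMonoidAlgebra.coeff_sum, Finset.sum_apply', Finset.sum_eq_single_of_mem e he.1]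
  · rw [hmon, map_zsmul, AddMonoidAlgebra.coeff_smul_apply, (hasMonicTop_ev_monomial e).1,
      smul_eq_mul, mul_one]
  · intro e' he' hne
    rw [hmon, map_zsmul, AddMonoidAlgebra.coeff_smul_apply, Finsupp.notMem_support_iff.1, smul_zero]
    intro hmem
    have hle := le_of_leadExp_le ((hasMonicTop_ev_monomial e').2 _ hmem)
    exact hne (le_antisymm (he.2 he' hle) hle)

theorem ev_injective : Function.Injective (ev n) := by
  refine (injective_iff_map_eq_zero _).2 fun p hp => ?_
  by_contra hp0
  obtain ⟨e, he⟩ := Finset.exists_maximal (MvPolynomial.support_nonempty.2 hp0)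
  have hcoeff := coeff_ev_leadExp he
  rw [hp] at hcoeff
  exact MvPolynomial.mem_support_iff.1 he.1 hcoeff.symm

-- `D n j` is `weight (fun m => m.1 + m.2 j)` by definition, and `m.1 + m.2 j` is the `x`-exponent
-- of the monomial `m` after `y_j := x`.
theorem yToX_D (j : Fin n) (f : A n) : yToX j (D n j f) = weight Prod.fst (yToX j f) :=
  mapDomain_weight_comp (yToXExp j) Prod.fst f

theorem xInv_eq_self_of_weight_fst_eq_zero {g : A n} (h : weight Prod.fst g = 0) : xInv g = g := by
  refine AddMonoidAlgebra.coeff_injective ?_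
  change Finsupp.mapDomain negFst g.coeff = g.coeff
  conv_rhs => rw [← Finsupp.mapDomain_id (v := g.coeff)]
  refine Finsupp.mapDomain_congr fun m hm => ?_
  by_contra hne
  refine Finsupp.mem_support_iff.1 hm (coeff_eq_zero_of_weight_eq_zero h fun h0 => hne ?_)
  ext <;> simp [negFst, h0]

theorem vToU_eq_zero_of_D_mem_span {f : A n} {p₀ p₁ : MvPolynomial (Option (Fin n)) ℤ}
    (hdec : f = ev n p₀ + X n * ev n p₁) {j : Fin n} (hD : D n j f ∈ Ideal.span {Y n j - X n}) :
    vToU j p₁ = 0 := by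
  have hweight : weight Prod.fst (yToX j f) = 0 := by
    obtain ⟨c, hc⟩ := Ideal.mem_span_singleton'.1 hD
    rw [← yToX_D, ← hc, map_mul, map_sub, yToX_Y, yToX_X, sub_self, mul_zero]
  have hfix := xInv_eq_self_of_weight_fst_eq_zero hweight
  rw [hdec, map_add, map_mul, yToX_X, yToX_ev, yToX_ev] at hfix
  exact (map_eq_zero_iff _ ev_injective).1
    (eq_zero_of_map_add_mul_eq xInv (xInv_ev _) (xInv_ev _) xInv_X_ne hfix)

theorem IsSym.of_prod_mul {q : MvPolynomial (Option (Fin n)) ℤ}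
    (h : IsSym n ((∏ j : Fin n, (MvPolynomial.X none - MvPolynomial.X (some j))) * q)) :
    IsSym n q := by
  intro σ
  have hprod : MvPolynomial.rename (Option.map σ)
      (∏ j : Fin n, (MvPolynomial.X none - MvPolynomial.X (some j)) : MvPolynomial _ ℤ) =
      ∏ j : Fin n, (MvPolynomial.X none - MvPolynomial.X (some j)) := by
    simp only [map_prod, map_sub, MvPolynomial.rename_X, Option.map_none, Option.map_some]
    exact Equiv.prod_comp σ fun j => MvPolynomial.X none - MvPolynomial.X (some j)
  have hne :
      (∏ j : Fin n, (MvPolynomial.X none - MvPolynomial.X (some j)) : MvPolynomial _ ℤ) ≠ 0 :=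
    Finset.prod_ne_zero_iff.2 fun j _ => X_none_sub_X_some_ne_zero j
  have := h σ
  rw [map_mul, hprod] at this
  exact mul_left_cancel₀ hne this

end Laurent

theorem statement10
    (f : A n) (p₀ p₁ : MvPolynomial (Option (Fin n)) ℤ)
    (hsym₁ : IsSym n p₁)
    (hdec : f = ev n p₀ + X n * ev n p₁)
    (hD : ∀ j : Fin n, D n j f ∈ Ideal.span {Y n j - X n}) :
    ∃ q : MvPolynomial (Option (Fin n)) ℤ, IsSym n q ∧
      p₁ = (∏ j : Fin n, (MvPolynomial.X none - MvPolynomial.X (some j))) * q := by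
  obtain ⟨q, hq⟩ := prod_X_sub_X_dvd Finset.univ fun j _ => vToU_eq_zero_of_D_mem_span hdec (hD j)
  exact ⟨q, IsSym.of_prod_mul (hq ▸ hsym₁), hq⟩

end Stmt10
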